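/- arXiv:1404.4477 — 3 statements merged into one kernel-verified Lean document; each statement's English description precedes it below -/
import Mathlib

section
/- Let (Ω, F, P) be a probability space, E a separable Banach space, v ≥ 0, and G : Ω → ℝ a random variable whose law is the centered Gaussian measure on ℝ with variance v. Let p > 1, let K : Ω → E be strongly measurable with E‖K‖_E^p < ∞, let q satisfy 1 ≤ q < p, and let T > 0. Then ∫₀^T ( E[ exp(sG − s²v/2) · ‖K‖_E^q ] )^{1/q} ds ≤ ( ∫₀^T exp( s²v / (2(p − q)) ) ds ) · ( E‖K‖_E^p )^{1/p}. -/
open MeasureTheory ProbabilityTheory Real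

/-!
For fixed `s`, Hölder's inequality with the conjugate exponents `p / (p - q)` and `p / q` splits
`E[exp(sG - s²v/2) ‖K‖^q]` into `‖K‖_{L^p}^q` and the `L^{p/(p-q)}` norm of the Cameron–Martin
density, which the Gaussian moment generating function `E[exp(tG)] = exp(t²v/2)` evaluates
to `exp(q s² v / (2(p - q)))`. Integrating the resulting pointwise bound over `s ∈ [0, T]` gives
the estimate; the left integrand is nonnegative, so its integrability in `s` is not needed.
-/

theorem intervalIntegral.integral_mono_of_nonneg {f g : ℝ → ℝ} {a b : ℝ} (hab : a ≤ b)
    (hf : ∀ x, 0 ≤ f x) (hg : IntervalIntegrable g volume a b) (hfg : ∀ x, f x ≤ g x) :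
    ∫ x in a..b, f x ≤ ∫ x in a..b, g x := by
  rw [intervalIntegral.integral_of_le hab, intervalIntegral.integral_of_le hab]
  exact MeasureTheory.integral_mono_of_nonneg (ae_of_all _ hf) hg.1 (ae_of_all _ hfg)

section Holder

variable {Ω : Type*} [MeasurableSpace Ω] {P : Measure Ω}

theorem memLp_ofReal_of_integrable_rpow {f : Ω → ℝ} {r : ℝ} (hr : 0 < r) (hf0 : 0 ≤ f)
    (hf : AEStronglyMeasurable f P) (hfr : Integrable (fun ω => f ω ^ r) P) :
    MemLp f (ENNReal.ofReal r) P := by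
  rw [← integrable_norm_rpow_iff hf (by simpa using hr) ENNReal.ofReal_ne_top,
    ENNReal.toReal_ofReal hr.le]
  simpa only [Real.norm_of_nonneg (hf0 _)] using hfr

theorem integral_mul_le_of_integrable_rpow {r r' : ℝ} (hrr' : r.HolderConjugate r')
    {f g : Ω → ℝ} (hf0 : 0 ≤ f) (hg0 : 0 ≤ g)
    (hf : AEStronglyMeasurable f P) (hg : AEStronglyMeasurable g P)
    (hfr : Integrable (fun ω => f ω ^ r) P) (hgr' : Integrable (fun ω => g ω ^ r') P) :
    ∫ ω, f ω * g ω ∂P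
      ≤ (∫ ω, f ω ^ r ∂P) ^ (1 / r) * (∫ ω, g ω ^ r' ∂P) ^ (1 / r') :=
  integral_mul_le_Lp_mul_Lq_of_nonneg hrr' (ae_of_all _ hf0) (ae_of_all _ hg0)
    (memLp_ofReal_of_integrable_rpow hrr'.pos hf0 hf hfr)
    (memLp_ofReal_of_integrable_rpow hrr'.symm.pos hg0 hg hgr')

end Holder

section CameronMartin

variable {Ω : Type*} [MeasurableSpace Ω] {P : Measure Ω} {v : NNReal} {G : Ω → ℝ}

theorem exp_shift_rpow_eq (s r x : ℝ) :
    Real.exp (s * x - s ^ 2 * (v : ℝ) / 2) ^ r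
      = Real.exp (-(r * (s ^ 2 * (v : ℝ) / 2))) * Real.exp (r * s * x) := by
  rw [← Real.exp_mul, ← Real.exp_add]
  ring_nf

theorem integrable_exp_shift_rpow (hG : P.map G = gaussianReal 0 v) (s r : ℝ) :
    Integrable (fun ω => Real.exp (s * G ω - s ^ 2 * (v : ℝ) / 2) ^ r) P := by
  have hG_meas : AEMeasurable G P := aemeasurable_of_map_neZero (by rw [hG]; infer_instance)
  simp only [exp_shift_rpow_eq]
  refine Integrable.const_mul ?_ _
  have h : Integrable (fun x => Real.exp (r * s * x)) (P.map G) :=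
    hG ▸ integrable_exp_mul_gaussianReal (r * s)
  exact (integrable_map_measure (by fun_prop) hG_meas).1 h

theorem integral_exp_shift_rpow_rpow_inv (hG : P.map G = gaussianReal 0 v) (s : ℝ) {r : ℝ}
    (hr : r ≠ 0) :
    (∫ ω, Real.exp (s * G ω - s ^ 2 * (v : ℝ) / 2) ^ r ∂P) ^ (1 / r)
      = Real.exp ((r - 1) * (s ^ 2 * (v : ℝ) / 2)) := by
  simp only [exp_shift_rpow_eq]
  rw [integral_const_mul, ← mgf, mgf_gaussianReal hG, ← Real.exp_add, ← Real.exp_mul]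
  congr 1
  field_simp
  ring

theorem integral_exp_shift_mul_rpow_le (hG : P.map G = gaussianReal 0 v)
    {φ : Ω → ℝ} (hφ0 : 0 ≤ φ) {p q : ℝ} (hq : 0 < q) (hqp : q < p)
    (hφp : Integrable (fun ω => φ ω ^ p) P) (s : ℝ) :
    (∫ ω, Real.exp (s * G ω - s ^ 2 * (v : ℝ) / 2) * φ ω ^ q ∂P) ^ (1 / q)
      ≤ Real.exp (s ^ 2 * (v : ℝ) / (2 * (p - q))) * (∫ ω, φ ω ^ p ∂P) ^ (1 / p) := by
  have hpq : 0 < p - q := sub_pos.2 hqp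
  have hp : 0 < p := hq.trans hqp
  have hconj : (p / (p - q)).HolderConjugate (p / q) := by
    rw [Real.holderConjugate_iff]
    refine ⟨(one_lt_div hpq).2 (by linarith), ?_⟩
    field_simp
    ring
  have hφq : (fun ω => (φ ω ^ q) ^ (p / q)) = fun ω => φ ω ^ p := by
    funext ω
    rw [← Real.rpow_mul (hφ0 ω), mul_div_cancel₀ _ hq.ne']
  have hφq_meas : AEStronglyMeasurable (fun ω => φ ω ^ q) P := by
    have h := (hφp.aestronglyMeasurable.aemeasurable.pow_const (q / p)).aestronglyMeasurable
    refine h.congr (ae_of_all _ fun ω => ?_)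
    dsimp only
    rw [← Real.rpow_mul (hφ0 ω), mul_div_cancel₀ _ hp.ne']
  have hG_meas : AEMeasurable G P := aemeasurable_of_map_neZero (by rw [hG]; infer_instance)
  have holder := integral_mul_le_of_integrable_rpow hconj (fun ω => (Real.exp_pos _).le)
    (fun ω => Real.rpow_nonneg (hφ0 ω) q) (by fun_prop) hφq_meas
    (integrable_exp_shift_rpow hG s _) (by rw [hφq]; exact hφp)
  rw [integral_exp_shift_rpow_rpow_inv hG s hconj.ne_zero, hφq, one_div_div] at holder
  have hX : 0 ≤ ∫ ω, φ ω ^ p ∂P := integral_nonneg fun ω => Real.rpow_nonneg (hφ0 ω) p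
  calc (∫ ω, Real.exp (s * G ω - s ^ 2 * (v : ℝ) / 2) * φ ω ^ q ∂P) ^ (1 / q)
      ≤ (Real.exp ((p / (p - q) - 1) * (s ^ 2 * (v : ℝ) / 2))
          * (∫ ω, φ ω ^ p ∂P) ^ (q / p)) ^ (1 / q) :=
        Real.rpow_le_rpow (integral_nonneg fun ω =>
          mul_nonneg (Real.exp_pos _).le (Real.rpow_nonneg (hφ0 ω) q)) holder (by positivity)
    _ = Real.exp (s ^ 2 * (v : ℝ) / (2 * (p - q))) * (∫ ω, φ ω ^ p ∂P) ^ (1 / p) := by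
        rw [Real.mul_rpow (by positivity) (by positivity), ← Real.exp_mul, ← Real.rpow_mul hX]
        congr 2 <;> field_simp
        ring

end CameronMartin

theorem gaussian_shift_moment_integral_estimate_general
    {Ω : Type*} [MeasurableSpace Ω] (P : Measure Ω)
    {E : Type*} [NormedAddCommGroup E]
    (v : NNReal) (G : Ω → ℝ) (hG : P.map G = gaussianReal 0 v)
    (p q : ℝ) (hq : 1 ≤ q) (hqp : q < p)
    (K : Ω → E)
    (hKp : Integrable (fun ω => ‖K ω‖ ^ p) P)
    (T : ℝ) (hT : 0 < T) :
    (∫ s in (0:ℝ)..T,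
        (∫ ω, Real.exp (s * G ω - s ^ 2 * (v : ℝ) / 2) * ‖K ω‖ ^ q ∂P) ^ (1 / q))
      ≤ (∫ s in (0:ℝ)..T, Real.exp (s ^ 2 * (v : ℝ) / (2 * (p - q))))
        * (∫ ω, ‖K ω‖ ^ p ∂P) ^ (1 / p) := by
  rw [← intervalIntegral.integral_mul_const]
  refine intervalIntegral.integral_mono_of_nonneg hT.le (fun s => by positivity) ?_
    (integral_exp_shift_mul_rpow_le hG (fun ω => norm_nonneg (K ω)) (by linarith) hqp hKp)
  exact Continuous.intervalIntegrable (by fun_prop) _ _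

/-- Lemma 3.6(ii) of the paper, rewritten via the Cameron–Martin change of measure:
for `G` centered Gaussian with variance `v`, a strongly measurable `K : Ω → E` with
`E‖K‖^p < ∞`, `1 ≤ q < p` and `T > 0`,
`∫₀ᵀ (E[exp(sG - s²v/2) ‖K‖^q])^{1/q} ds ≤ (∫₀ᵀ exp(s²v/(2(p-q))) ds) (E‖K‖^p)^{1/p}`. -/
theorem gaussian_shift_moment_integral_estimate
    {Ω : Type*} [MeasurableSpace Ω] (P : Measure Ω) [IsProbabilityMeasure P]
    {E : Type*} [NormedAddCommGroup E] [NormedSpace ℝ E] [CompleteSpace E]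
    [TopologicalSpace.SeparableSpace E]
    (v : NNReal) (G : Ω → ℝ) (hG : P.map G = gaussianReal 0 v)
    (p q : ℝ) (hp : 1 < p) (hq : 1 ≤ q) (hqp : q < p)
    (K : Ω → E) (hKmeas : StronglyMeasurable K)
    (hKp : Integrable (fun ω => ‖K ω‖ ^ p) P)
    (T : ℝ) (hT : 0 < T) :
    (∫ s in (0:ℝ)..T,
        (∫ ω, Real.exp (s * G ω - s ^ 2 * (v : ℝ) / 2) * ‖K ω‖ ^ q ∂P) ^ (1 / q))
      ≤ (∫ s in (0:ℝ)..T, Real.exp (s ^ 2 * (v : ℝ) / (2 * (p - q))))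
        * (∫ ω, ‖K ω‖ ^ p ∂P) ^ (1 / p) :=
  gaussian_shift_moment_integral_estimate_general P v G hG p q hq hqp K hKp T hT
end

section
/- Let T > 0 and let ν be a finite measure on ℝ with ν({0}) = 0 and c := ν(ℝ) > 0. Let D := ([0,T] → ℝ) be equipped with the product (coordinate-projection) σ-algebra, and let m denote the measure (Lebesgue measure on [0,T]) ⊗ ν on [0,T] × ℝ, with normalization m̄ := m/(T·c) a probability measure. For k ≥ 0 define the measurable map S_k : ([0,T] × ℝ)^k → D by S_k((t_1,x_1),…,(t_k,x_k)) := (t ↦ Σ_{i=1}^k x_i · 1_{[t_i,T]}(t)) (with S_0 the zero path), and define the compound Poisson path law P_X := Σ_{k=0}^∞ e^{−cT} (cT)^k / k! · (S_k)_*(m̄^{⊗k}), a probability measure on D. Then for every measurable set Λ ⊆ D with P_X(Λ) = 0 one has (P_X ⊗ m)( { (x,(r,v)) ∈ D × ([0,T] × ℝ) : x + v·1_{[r,T]} ∈ Λ } ) = 0. -/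
/-!
Write `P_X ⊗ m = Σ_k w_k · (S_k)_*m̄^{⊗k} ⊗ m` and note `m ≪ m̄`. Adding one jump `(r, v)`
to the path `S_k(jumps)` gives `S_{k+1}` of the jumps with `(r, v)` appended, and appending
is measure preserving `m̄^{⊗k} ⊗ m̄ → m̄^{⊗(k+1)}`. Hence the image of the `k`-th term under
the perturbation map is absolutely continuous with respect to `(S_{k+1})_*m̄^{⊗(k+1)}`,
which enters `P_X` with the positive weight `w_{k+1}`.
-/

open MeasureTheory

/-- The measure `m = (Lebesgue on [0,T]) ⊗ ν` on `[0,T] × ℝ`. -/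
noncomputable def jumpMeasure (T : ℝ) (ν : Measure ℝ) : Measure (ℝ × ℝ) :=
  (volume.restrict (Set.Icc 0 T)).prod ν

/-- The normalized measure `m̄ = m / (T·c)`. -/
noncomputable def jumpMeasureBar (T c : ℝ) (ν : Measure ℝ) : Measure (ℝ × ℝ) :=
  (ENNReal.ofReal (T * c))⁻¹ • jumpMeasure T ν

/-- The map sending `k` jump times/sizes `(t_i, x_i)` to the piecewise constant path
`t ↦ Σ_i x_i · 1_{[t_i, T]}(t)` on `[0,T]`. -/
noncomputable def jumpPath (T : ℝ) (k : ℕ) (jumps : Fin k → ℝ × ℝ) : Set.Icc (0:ℝ) T → ℝ :=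
  fun t => ∑ i, if (jumps i).1 ≤ (t : ℝ) then (jumps i).2 else 0

/-- The compound Poisson path law `P_X = Σ_k e^{-cT} (cT)^k / k! · (S_k)_*(m̄^{⊗k})`
on the path space `[0,T] → ℝ` with the product σ-algebra. -/
noncomputable def compoundPoissonLaw (T c : ℝ) (ν : Measure ℝ) :
    Measure (Set.Icc (0:ℝ) T → ℝ) :=
  Measure.sum fun k =>
    ENNReal.ofReal (Real.exp (-(c * T)) * (c * T) ^ k / (Nat.factorial k)) •
      Measure.map (jumpPath T k) (Measure.pi fun _ : Fin k => jumpMeasureBar T c ν)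

open Measure

lemma map_snoc_pi_prod {α : Type*} [MeasurableSpace α] (μ : Measure α) [SigmaFinite μ]
    (k : ℕ) :
    ((Measure.pi fun _ : Fin k => μ).prod μ).map (fun p => Fin.snoc p.1 p.2) =
      Measure.pi fun _ : Fin (k + 1) => μ := by
  convert ((measurePreserving_piFinSuccAbove (fun _ : Fin (k + 1) => μ) (Fin.last k)).symm.comp
    measurePreserving_swap).map_eq using 2
  funext p
  exact (Fin.insertNth_last' p.2 p.1).symm

lemma measurable_ite_fst_le (t : ℝ) :
    Measurable (fun q : ℝ × ℝ => if q.1 ≤ t then q.2 else 0) :=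
  measurable_snd.ite (measurableSet_le measurable_fst measurable_const) measurable_const

lemma measurable_jumpPath (T : ℝ) (k : ℕ) : Measurable (jumpPath T k) :=
  measurable_pi_lambda _ fun t =>
    Finset.measurable_sum _ fun i _ => (measurable_ite_fst_le t).comp (measurable_pi_apply i)

noncomputable def addJump (T : ℝ) (x : Set.Icc (0:ℝ) T → ℝ) (q : ℝ × ℝ) :
    Set.Icc (0:ℝ) T → ℝ :=
  fun t => x t + if q.1 ≤ (t : ℝ) then q.2 else 0

lemma measurable_addJump (T : ℝ) : Measurable (Function.uncurry (addJump T)) :=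
  measurable_pi_lambda _ fun t =>
    ((measurable_pi_apply t).comp measurable_fst).add
      ((measurable_ite_fst_le t).comp measurable_snd)

lemma addJump_jumpPath (T : ℝ) {k : ℕ} (jumps : Fin k → ℝ × ℝ) (q : ℝ × ℝ) :
    addJump T (jumpPath T k jumps) q = jumpPath T (k + 1) (Fin.snoc jumps q) := by
  funext t
  simp [addJump, jumpPath, Fin.sum_univ_castSucc]

lemma map_addJump_map_jumpPath_prod (T : ℝ) (k : ℕ) (μ : Measure (ℝ × ℝ)) [SigmaFinite μ] :
    ((Measure.pi fun _ : Fin k => μ).map (jumpPath T k) |>.prod μ).map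
        (Function.uncurry (addJump T)) =
      (Measure.pi fun _ : Fin (k + 1) => μ).map (jumpPath T (k + 1)) := by
  have hprod := map_prod_map (Measure.pi fun _ : Fin k => μ) μ (measurable_jumpPath T k)
    measurable_id
  rw [Measure.map_id] at hprod
  rw [← map_snoc_pi_prod, hprod,
    Measure.map_map (measurable_addJump T) ((measurable_jumpPath T k).prodMap measurable_id),
    Measure.map_map (measurable_jumpPath T (k + 1)) (by fun_prop)]
  congr 1
  funext p
  exact addJump_jumpPath T p.1 p.2

lemma jumpMeasure_absolutelyContinuous_jumpMeasureBar (T c : ℝ) (ν : Measure ℝ) :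
    jumpMeasure T ν ≪ jumpMeasureBar T c ν :=
  absolutelyContinuous_smul (ENNReal.inv_ne_zero.2 ENNReal.ofReal_ne_top)

instance (T : ℝ) (ν : Measure ℝ) [IsFiniteMeasure ν] : IsFiniteMeasure (jumpMeasure T ν) := by
  unfold jumpMeasure
  infer_instance

lemma isFiniteMeasure_jumpMeasureBar {T c : ℝ} (hTc : 0 < T * c) (ν : Measure ℝ)
    [IsFiniteMeasure ν] : IsFiniteMeasure (jumpMeasureBar T c ν) :=
  ⟨ENNReal.mul_lt_top (ENNReal.inv_lt_top.2 (ENNReal.ofReal_pos.2 hTc)) (measure_lt_top _ _)⟩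

lemma map_addJump_compoundPoissonLaw_prod_absolutelyContinuous {T c : ℝ} (hT : 0 < T)
    (hc : 0 < c) (ν : Measure ℝ) [IsFiniteMeasure ν] :
    ((compoundPoissonLaw T c ν).prod (jumpMeasure T ν)).map (Function.uncurry (addJump T)) ≪
      compoundPoissonLaw T c ν := by
  have := isFiniteMeasure_jumpMeasureBar (mul_pos hT hc) ν
  have hm := jumpMeasure_absolutelyContinuous_jumpMeasureBar T c ν
  refine ((AbsolutelyContinuous.rfl.prod hm).map (measurable_addJump T)).trans ?_
  rw [compoundPoissonLaw, prod_sum_left, Measure.map_sum (measurable_addJump T).aemeasurable]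
  refine absolutelyContinuous_sum_left fun k => ?_
  rw [prod_smul_left, Measure.map_smul, map_addJump_map_jumpPath_prod]
  refine (AbsolutelyContinuous.rfl.smul_left _).trans (absolutelyContinuous_sum_right (k + 1)
    (absolutelyContinuous_smul ?_))
  exact (ENNReal.ofReal_pos.2 (by positivity)).ne'

theorem compoundPoisson_jump_perturbation_null_general
    (T : ℝ) (hT : 0 < T) (ν : Measure ℝ) [IsFiniteMeasure ν]
    (c : ℝ) (hc : 0 < c)
    (Λ : Set (Set.Icc (0:ℝ) T → ℝ)) (hΛ : MeasurableSet Λ)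
    (hΛ0 : compoundPoissonLaw T c ν Λ = 0) :
    ((compoundPoissonLaw T c ν).prod (jumpMeasure T ν))
      {p : (Set.Icc (0:ℝ) T → ℝ) × (ℝ × ℝ) |
        (fun t => p.1 t + if p.2.1 ≤ (t : ℝ) then p.2.2 else 0) ∈ Λ} = 0 := by
  have hnull := map_addJump_compoundPoissonLaw_prod_absolutelyContinuous hT hc ν hΛ0
  rwa [Measure.map_apply (measurable_addJump T) hΛ] at hnull

/-- Step 2 of the proof of Lemma 3.3 of the paper: if `Λ` is a null set for the
compound Poisson path law `P_X`, then `P_X ⊗ m`-almost every perturbation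
`x + v·1_{[r,T]}` of a path `x` by one extra jump still avoids `Λ`. -/
theorem compoundPoisson_jump_perturbation_null
    (T : ℝ) (hT : 0 < T) (ν : Measure ℝ) [IsFiniteMeasure ν] (hν0 : ν {0} = 0)
    (c : ℝ) (hc : 0 < c) (hνc : ν Set.univ = ENNReal.ofReal c)
    (Λ : Set (Set.Icc (0:ℝ) T → ℝ)) (hΛ : MeasurableSet Λ)
    (hΛ0 : compoundPoissonLaw T c ν Λ = 0) :
    ((compoundPoissonLaw T c ν).prod (jumpMeasure T ν))
      {p : (Set.Icc (0:ℝ) T → ℝ) × (ℝ × ℝ) |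
        (fun t => p.1 t + if p.2.1 ≤ (t : ℝ) then p.2.2 else 0) ∈ Λ} = 0 :=
  compoundPoisson_jump_perturbation_null_general T hT ν c hc Λ hΛ hΛ0
end

section
/- Let T > 0 and let ν be a σ-finite measure on ℝ, and set μ := (Lebesgue measure on [0,T]) ⊗ ν on [0,T] × ℝ. Let D := ([0,T] → ℝ) be equipped with the product (coordinate-projection) σ-algebra and pointwise addition, and define the measurable jump-perturbation map Φ : D × ([0,T] × ℝ) → D by Φ(x,(r,v)) := x + v·1_{[r,T]}. Suppose Q is a probability measure on D such that for every measurable Λ ⊆ D with Q(Λ) = 0 one has (Q ⊗ μ)(Φ^{-1}(Λ)) = 0. Then for every probability measure R on D, the convolution R ∗ Q (the image of R ⊗ Q under pointwise addition of paths) has the same property: for every measurable Λ ⊆ D with (R ∗ Q)(Λ) = 0 one has ((R ∗ Q) ⊗ μ)(Φ^{-1}(Λ)) = 0. -/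
/-!
Pushing `(R ∗ Q) ⊗ μ` forward along the jump map `Φ` is the same as convolving `R` with the
pushforward of `Q ⊗ μ`, because adding a jump commutes with adding an independent path:
`Φ (h + x, e) = h + Φ (x, e)`. Absolute continuity `Φ₊(Q ⊗ μ) ≪ Q` then survives convolution
with `R`.
-/

open MeasureTheory Measure

section Convolution

variable {Ω E : Type*} [AddMonoid Ω] [MeasurableSpace Ω] [MeasurableAdd₂ Ω] [MeasurableSpace E]

theorem conv_absolutelyContinuous_conv_left (R : Measure Ω) {ρ Q : Measure Ω} [SFinite Q]
    (h : ρ ≪ Q) : R ∗ ρ ≪ R ∗ Q :=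
  (AbsolutelyContinuous.rfl.prod h).map measurable_add

theorem map_conv_prod_eq_conv_map_prod {Φ : Ω × E → Ω} (hΦ : Measurable Φ)
    (hΦ_add : ∀ h x e, Φ (h + x, e) = h + Φ (x, e))
    (R Q : Measure Ω) [SFinite R] [SFinite Q] (μ : Measure E) [SFinite μ] :
    ((R ∗ Q).prod μ).map Φ = R ∗ (Q.prod μ).map Φ := by
  have h_comm : Φ ∘ Prod.map (fun q : Ω × Ω => q.1 + q.2) id =
      ((fun q : Ω × Ω => q.1 + q.2) ∘ Prod.map id Φ) ∘ MeasurableEquiv.prodAssoc := by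
    funext ⟨⟨h, x⟩, e⟩
    exact hΦ_add h x e
  rw [conv, conv, ← map_id (μ := μ), map_prod_map _ _ measurable_add measurable_id,
    map_map hΦ (measurable_add.prodMap measurable_id), h_comm,
    ← map_map (measurable_add.comp (measurable_id.prodMap hΦ)) (MeasurableEquiv.measurable _),
    (measurePreserving_prodAssoc R Q μ).map_eq,
    ← map_map measurable_add (measurable_id.prodMap hΦ),
    ← map_prod_map _ _ measurable_id hΦ, map_id, map_id]

theorem map_conv_prod_absolutelyContinuous {Φ : Ω × E → Ω} (hΦ : Measurable Φ)
    (hΦ_add : ∀ h x e, Φ (h + x, e) = h + Φ (x, e))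
    (R Q : Measure Ω) [SFinite R] [SFinite Q] (μ : Measure E) [SFinite μ]
    (hQ : (Q.prod μ).map Φ ≪ Q) :
    ((R ∗ Q).prod μ).map Φ ≪ R ∗ Q := by
  rw [map_conv_prod_eq_conv_map_prod hΦ hΦ_add]
  exact conv_absolutelyContinuous_conv_left R hQ

end Convolution

section Jump

variable {T : ℝ}

noncomputable def jumpPerturb (T : ℝ) (p : (Set.Icc (0:ℝ) T → ℝ) × (ℝ × ℝ)) : Set.Icc (0:ℝ) T → ℝ :=
  fun t => p.1 t + if p.2.1 ≤ (t : ℝ) then p.2.2 else 0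

theorem measurable_jumpPerturb : Measurable (jumpPerturb T) := by
  refine measurable_pi_lambda _ fun t => ((measurable_pi_apply t).comp measurable_fst).add ?_
  exact Measurable.ite (measurableSet_le (by fun_prop) measurable_const) (by fun_prop)
    measurable_const

theorem jumpPerturb_add_left (h x : Set.Icc (0:ℝ) T → ℝ) (e : ℝ × ℝ) :
    jumpPerturb T (h + x, e) = h + jumpPerturb T (x, e) := by
  funext t
  simp only [jumpPerturb, Pi.add_apply, add_assoc]

end Jump

theorem jump_perturbation_null_stable_under_convolution_general
    (T : ℝ) (ν : Measure ℝ) [SigmaFinite ν]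
    (Q R : Measure (Set.Icc (0:ℝ) T → ℝ))
    [IsProbabilityMeasure Q] [IsProbabilityMeasure R]
    (hQ : ∀ Λ : Set (Set.Icc (0:ℝ) T → ℝ), MeasurableSet Λ → Q Λ = 0 →
      (Q.prod ((volume.restrict (Set.Icc 0 T)).prod ν))
        {p : (Set.Icc (0:ℝ) T → ℝ) × (ℝ × ℝ) |
          (fun t => p.1 t + if p.2.1 ≤ (t : ℝ) then p.2.2 else 0) ∈ Λ} = 0) :
    ∀ Λ : Set (Set.Icc (0:ℝ) T → ℝ), MeasurableSet Λ →
      Measure.map (fun q => q.1 + q.2) (R.prod Q) Λ = 0 →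
      ((Measure.map (fun q => q.1 + q.2) (R.prod Q)).prod
          ((volume.restrict (Set.Icc 0 T)).prod ν))
        {p : (Set.Icc (0:ℝ) T → ℝ) × (ℝ × ℝ) |
          (fun t => p.1 t + if p.2.1 ≤ (t : ℝ) then p.2.2 else 0) ∈ Λ} = 0 := by
  intro Λ hΛ hΛ_null
  have hQ_ac : (Q.prod ((volume.restrict (Set.Icc 0 T)).prod ν)).map (jumpPerturb T) ≪ Q :=
    AbsolutelyContinuous.mk fun Λ hΛ hΛ_null => by
      rw [map_apply measurable_jumpPerturb hΛ]
      exact hQ Λ hΛ hΛ_null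
  have h_ac := map_conv_prod_absolutelyContinuous measurable_jumpPerturb jumpPerturb_add_left
    R Q _ hQ_ac hΛ_null
  rwa [map_apply measurable_jumpPerturb hΛ] at h_ac

/-- Step 1 of the proof of Lemma 3.3 of the paper, in abstract form: on the path space
`D = ([0,T] → ℝ)` with the product σ-algebra and pointwise addition, let
`μ = (Lebesgue on [0,T]) ⊗ ν` and let `Φ(x,(r,v)) = x + v·1_{[r,T]}` be the
jump-perturbation map. If a probability path law `Q` has the property that
`Q`-null sets are `(Q ⊗ μ)`-null for `Φ`, then so does the convolution `R ∗ Q`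
(the image of `R ⊗ Q` under pointwise addition) for any probability path law `R`. -/
theorem jump_perturbation_null_stable_under_convolution
    (T : ℝ) (hT : 0 < T) (ν : Measure ℝ) [SigmaFinite ν]
    (Q R : Measure (Set.Icc (0:ℝ) T → ℝ))
    [IsProbabilityMeasure Q] [IsProbabilityMeasure R]
    (hQ : ∀ Λ : Set (Set.Icc (0:ℝ) T → ℝ), MeasurableSet Λ → Q Λ = 0 →
      (Q.prod ((volume.restrict (Set.Icc 0 T)).prod ν))
        {p : (Set.Icc (0:ℝ) T → ℝ) × (ℝ × ℝ) |
          (fun t => p.1 t + if p.2.1 ≤ (t : ℝ) then p.2.2 else 0) ∈ Λ} = 0) :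
    ∀ Λ : Set (Set.Icc (0:ℝ) T → ℝ), MeasurableSet Λ →
      Measure.map (fun q => q.1 + q.2) (R.prod Q) Λ = 0 →
      ((Measure.map (fun q => q.1 + q.2) (R.prod Q)).prod
          ((volume.restrict (Set.Icc 0 T)).prod ν))
        {p : (Set.Icc (0:ℝ) T → ℝ) × (ℝ × ℝ) |
          (fun t => p.1 t + if p.2.1 ≤ (t : ℝ) then p.2.2 else 0) ∈ Λ} = 0 :=
  jump_perturbation_null_stable_under_convolution_general T ν Q R hQ
end
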